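/- arXiv:2406.09574 — 4 statements merged into one kernel-verified Lean document; each statement's English description precedes it below -/
import Mathlib

section
/- Let n ≥ 1 and p : Fin n → ℝ with p_i > 0 for every i. Then the function x ↦ 1 − ∏_{i} (1 − exp(−p_i · x)) is integrable on [0, ∞), and ∫₀^∞ (1 − ∏_{i} (1 − exp(−p_i · x))) dx = Σ_{S ⊆ Fin n, S ≠ ∅} (−1)^{|S|+1} / (Σ_{i ∈ S} p_i). (This is the paper's integral representation (Eq. 'arbitraryksample') of the expected coupon-collection time for an arbitrary sampling distribution with item probabilities p_i.) -/
/-! Expanding the product turns the integrand into a finite signed sum of decaying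
exponentials `exp (-(∑ i ∈ S, p i) * x)` over the nonempty `S`, and each of these integrates
to `1 / ∑ i ∈ S, p i`. -/

open Finset Real MeasureTheory

theorem Finset.one_sub_prod_one_sub {ι R : Type*} [CommRing R] [DecidableEq ι] (s : Finset ι)
    (f : ι → R) :
    1 - ∏ i ∈ s, (1 - f i) = ∑ t ∈ s.powerset with t.Nonempty, (-1) ^ (#t + 1) * ∏ i ∈ t, f i := by
  have hempty : {t ∈ s.powerset | ¬t.Nonempty} = {∅} := by
    ext t
    simp +contextual [Finset.not_nonempty_iff_eq_empty]
  rw [prod_sub, ← sum_filter_add_sum_filter_not s.powerset Finset.Nonempty, hempty]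
  simp only [sum_singleton, card_empty, pow_zero, prod_empty, prod_const_one, mul_one]
  rw [sub_add_cancel_right, ← sum_neg_distrib]
  exact sum_congr rfl fun t _ => by ring

theorem one_sub_prod_one_sub_exp {ι : Type*} [DecidableEq ι] (s : Finset ι) (p : ι → ℝ) (x : ℝ) :
    1 - ∏ i ∈ s, (1 - exp (-p i * x)) =
      ∑ t ∈ s.powerset with t.Nonempty, (-1) ^ (#t + 1) * exp (-(∑ i ∈ t, p i) * x) := by
  rw [one_sub_prod_one_sub]
  refine sum_congr rfl fun t _ => ?_
  rw [← exp_sum, neg_mul, sum_mul, ← sum_neg_distrib]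
  simp only [neg_mul]

theorem integrableOn_exp_neg_mul_Ici {b : ℝ} (hb : 0 < b) (c : ℝ) :
    IntegrableOn (fun x => exp (-b * x)) (Set.Ici c) :=
  (integrableOn_Ici_iff_integrableOn_Ioi (by simp)).2
    (integrableOn_exp_mul_Ioi (neg_neg_of_pos hb) c)

theorem integral_exp_neg_mul_Ici {b : ℝ} (hb : 0 < b) (c : ℝ) :
    ∫ x in Set.Ici c, exp (-b * x) = exp (-b * c) / b := by
  rw [integral_Ici_eq_integral_Ioi, integral_exp_mul_Ioi (neg_neg_of_pos hb), neg_div_neg_eq]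

theorem coupon_collector_integral_general (n : ℕ) (p : Fin n → ℝ)
    (hp : ∀ i, 0 < p i) :
    IntegrableOn (fun x : ℝ => 1 - ∏ i, (1 - Real.exp (-p i * x))) (Set.Ici 0) ∧
    ∫ x in Set.Ici (0 : ℝ), (1 - ∏ i, (1 - Real.exp (-p i * x)))
      = ∑ S ∈ (Finset.univ : Finset (Fin n)).powerset.filter fun S => S.Nonempty,
          (-1 : ℝ) ^ (S.card + 1) / (∑ i ∈ S, p i) := by
  have hpos : ∀ S : Finset (Fin n), S.Nonempty → 0 < ∑ i ∈ S, p i :=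
    fun S hS => sum_pos (fun i _ => hp i) hS
  have hint : ∀ S ∈ univ.powerset.filter Finset.Nonempty, IntegrableOn
      (fun x => (-1 : ℝ) ^ (#S + 1) * exp (-(∑ i ∈ S, p i) * x)) (Set.Ici 0) :=
    fun S hS => (integrableOn_exp_neg_mul_Ici (hpos S (mem_filter.1 hS).2) 0).const_mul _
  simp_rw [one_sub_prod_one_sub_exp]
  refine ⟨integrable_finsetSum _ hint, ?_⟩
  rw [integral_finsetSum _ hint]
  refine sum_congr rfl fun S hS => ?_
  rw [integral_const_mul, integral_exp_neg_mul_Ici (hpos S (mem_filter.1 hS).2), mul_zero,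
    exp_zero, mul_one_div]

theorem coupon_collector_integral (n : ℕ) (hn : 1 ≤ n) (p : Fin n → ℝ)
    (hp : ∀ i, 0 < p i) :
    IntegrableOn (fun x : ℝ => 1 - ∏ i, (1 - Real.exp (-p i * x))) (Set.Ici 0) ∧
    ∫ x in Set.Ici (0 : ℝ), (1 - ∏ i, (1 - Real.exp (-p i * x)))
      = ∑ S ∈ (Finset.univ : Finset (Fin n)).powerset.filter fun S => S.Nonempty,
          (-1 : ℝ) ^ (S.card + 1) / (∑ i ∈ S, p i) :=
  coupon_collector_integral_general n p hp
end

section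
/- Let n ≥ 1, p : Fin n → ℝ, and p_min > 0 with p_min ≤ p_i for every i. Then ∫₀^∞ (1 − ∏_{i} (1 − exp(−p_i · x))) dx ≤ H_n / p_min. (This is the paper's upper bound on the expected number of i.i.d. samples needed to collect all n items when each item has sampling probability at least p_min, yielding E[T] ≤ H_n / μ_min² in the action-pair setting.) -/
/-!
Since every `p i ≥ pmin`, each factor of the product is at least `q x = 1 - exp (-pmin * x)`, so
the integrand is at most `1 - q ^ n = ∑ k < n, q ^ k * (1 - q)`. The `k`-th summand is the
derivative of `q ^ (k + 1) / (pmin * (k + 1))`, which increases from `0` to `1 / (pmin * (k + 1))`,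
and these values add up to `H_n / pmin`.
-/

open Real MeasureTheory Finset Filter Set Topology

section Exponential

variable {a : ℝ}

lemma one_sub_exp_neg_mul_nonneg (ha : 0 ≤ a) {x : ℝ} (hx : 0 ≤ x) : 0 ≤ 1 - exp (-a * x) :=
  sub_nonneg.2 <| exp_le_one_iff.2 <| mul_nonpos_of_nonpos_of_nonneg (neg_nonpos.2 ha) hx

lemma one_sub_exp_le_one (y : ℝ) : 1 - exp y ≤ 1 :=
  sub_le_self 1 (exp_pos y).le

lemma one_sub_exp_neg_mul_pow_mul_exp_nonneg (ha : 0 ≤ a) {x : ℝ} (hx : 0 ≤ x) (k : ℕ) :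
    0 ≤ (1 - exp (-a * x)) ^ k * exp (-a * x) :=
  mul_nonneg (pow_nonneg (one_sub_exp_neg_mul_nonneg ha hx) k) (exp_pos _).le

lemma hasDerivAt_one_sub_exp_neg_mul_pow_div (ha : a ≠ 0) (k : ℕ) (x : ℝ) :
    HasDerivAt (fun x => (1 - exp (-a * x)) ^ (k + 1) / (a * (k + 1)))
      ((1 - exp (-a * x)) ^ k * exp (-a * x)) x := by
  have h := ((((hasDerivAt_id x).const_mul (-a)).exp.const_sub 1).pow (k + 1)).div_const
    (a * (k + 1))
  refine h.congr_deriv ?_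
  simp only [id, mul_one, add_tsub_cancel_right]
  push_cast
  field_simp

lemma tendsto_one_sub_exp_neg_mul_atTop (ha : 0 < a) :
    Tendsto (fun x => 1 - exp (-a * x)) atTop (𝓝 1) := by
  have h : Tendsto (fun x => exp (-a * x)) atTop (𝓝 0) :=
    tendsto_exp_atBot.comp (tendsto_id.const_mul_atTop_of_neg (neg_neg_of_pos ha))
  simpa using h.const_sub 1

lemma tendsto_one_sub_exp_neg_mul_pow_div_atTop (ha : 0 < a) (k : ℕ) :
    Tendsto (fun x => (1 - exp (-a * x)) ^ (k + 1) / (a * (k + 1))) atTop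
      (𝓝 (1 / (a * (k + 1)))) := by
  simpa using ((tendsto_one_sub_exp_neg_mul_atTop ha).pow (k + 1)).div_const (a * (k + 1))

lemma integrableOn_one_sub_exp_neg_mul_pow_mul_exp (ha : 0 < a) (k : ℕ) :
    IntegrableOn (fun x => (1 - exp (-a * x)) ^ k * exp (-a * x)) (Ioi 0) :=
  integrableOn_Ioi_deriv_of_nonneg' (fun x _ => hasDerivAt_one_sub_exp_neg_mul_pow_div ha.ne' k x)
    (fun _ hx => one_sub_exp_neg_mul_pow_mul_exp_nonneg ha.le (le_of_lt hx) k)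
    (tendsto_one_sub_exp_neg_mul_pow_div_atTop ha k)

lemma integral_one_sub_exp_neg_mul_pow_mul_exp (ha : 0 < a) (k : ℕ) :
    ∫ x in Ioi 0, (1 - exp (-a * x)) ^ k * exp (-a * x) = 1 / (a * (k + 1)) := by
  rw [integral_Ioi_of_hasDerivAt_of_nonneg'
    (fun x _ => hasDerivAt_one_sub_exp_neg_mul_pow_div ha.ne' k x)
    (fun _ hx => one_sub_exp_neg_mul_pow_mul_exp_nonneg ha.le (le_of_lt hx) k)
    (tendsto_one_sub_exp_neg_mul_pow_div_atTop ha k)]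
  simp

lemma one_sub_one_sub_exp_pow_eq_sum (y : ℝ) (n : ℕ) :
    1 - (1 - exp y) ^ n = ∑ k ∈ range n, (1 - exp y) ^ k * exp y := by
  rw [← sum_mul, mul_comm, ← mul_neg_geom_sum, sub_sub_cancel]

lemma integrableOn_one_sub_one_sub_exp_neg_mul_pow (ha : 0 < a) (n : ℕ) :
    IntegrableOn (fun x => 1 - (1 - exp (-a * x)) ^ n) (Ioi 0) := by
  simp_rw [one_sub_one_sub_exp_pow_eq_sum]
  exact integrable_finsetSum _ fun k _ => integrableOn_one_sub_exp_neg_mul_pow_mul_exp ha k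

lemma integral_one_sub_one_sub_exp_neg_mul_pow (ha : 0 < a) (n : ℕ) :
    ∫ x in Ioi 0, 1 - (1 - exp (-a * x)) ^ n = harmonic n / a := by
  simp_rw [one_sub_one_sub_exp_pow_eq_sum]
  rw [integral_finsetSum _ fun k _ => integrableOn_one_sub_exp_neg_mul_pow_mul_exp ha k]
  simp only [integral_one_sub_exp_neg_mul_pow_mul_exp ha, harmonic]
  push_cast
  rw [sum_div]
  exact sum_congr rfl fun k _ => by field_simp

end Exponential

section Product

variable {ι : Type*} [Fintype ι] {p : ι → ℝ} {x : ℝ}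

lemma prod_one_sub_exp_neg_mul_le_one (hp : ∀ i, 0 ≤ p i) (hx : 0 ≤ x) :
    ∏ i, (1 - exp (-p i * x)) ≤ 1 :=
  prod_le_one (fun i _ => one_sub_exp_neg_mul_nonneg (hp i) hx) fun _ _ => one_sub_exp_le_one _

lemma one_sub_exp_neg_mul_pow_card_le_prod {a : ℝ} (ha : 0 ≤ a) (hp : ∀ i, a ≤ p i)
    (hx : 0 ≤ x) : (1 - exp (-a * x)) ^ Fintype.card ι ≤ ∏ i, (1 - exp (-p i * x)) := by
  rw [← card_univ, ← prod_const]
  refine prod_le_prod (fun _ _ => one_sub_exp_neg_mul_nonneg ha hx) fun i _ => ?_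
  gcongr
  exact hp i

end Product

theorem coupon_collector_integral_le_harmonic_general (n : ℕ)
    (p : Fin n → ℝ) (pmin : ℝ) (hpmin : 0 < pmin) (hp : ∀ i, pmin ≤ p i) :
    ∫ x in Set.Ici (0 : ℝ), (1 - ∏ i, (1 - Real.exp (-p i * x)))
      ≤ (∑ k ∈ Finset.Icc 1 n, 1 / (k : ℝ)) / pmin := by
  have hp0 : ∀ i, 0 ≤ p i := fun i => hpmin.le.trans (hp i)
  calc ∫ x in Ici 0, (1 - ∏ i, (1 - exp (-p i * x)))
      = ∫ x in Ioi 0, (1 - ∏ i, (1 - exp (-p i * x))) := integral_Ici_eq_integral_Ioi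
    _ ≤ ∫ x in Ioi 0, 1 - (1 - exp (-pmin * x)) ^ n := by
      refine integral_mono_of_nonneg ?_ (integrableOn_one_sub_one_sub_exp_neg_mul_pow hpmin n) ?_
      · filter_upwards [ae_restrict_mem measurableSet_Ioi] with x hx
        exact sub_nonneg.2 (prod_one_sub_exp_neg_mul_le_one hp0 (le_of_lt hx))
      · filter_upwards [ae_restrict_mem measurableSet_Ioi] with x hx
        have h := one_sub_exp_neg_mul_pow_card_le_prod hpmin.le hp (le_of_lt hx)
        rw [Fintype.card_fin] at h
        linarith
    _ = harmonic n / pmin := integral_one_sub_one_sub_exp_neg_mul_pow hpmin n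
    _ = (∑ k ∈ Icc 1 n, 1 / (k : ℝ)) / pmin := by
      rw [harmonic_eq_sum_Icc]
      push_cast
      simp only [one_div]

theorem coupon_collector_integral_le_harmonic (n : ℕ) (hn : 1 ≤ n)
    (p : Fin n → ℝ) (pmin : ℝ) (hpmin : 0 < pmin) (hp : ∀ i, pmin ≤ p i) :
    ∫ x in Set.Ici (0 : ℝ), (1 - ∏ i, (1 - Real.exp (-p i * x)))
      ≤ (∑ k ∈ Finset.Icc 1 n, 1 / (k : ℝ)) / pmin :=
  coupon_collector_integral_le_harmonic_general n p pmin hpmin hp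
end

section
/- Let n ≥ 1 and let μ be a probability measure on Fin n with μ{i} > 0 for every i. Consider the sample space Ω = (ℕ → Fin n) equipped with the infinite product measure with each coordinate distributed according to μ (i.i.d. draws X₀, X₁, …). For each i define T_i(ω) = 1 + inf{k : ω(k) = i} (the number of draws until item i first appears) and T(ω) = max_i T_i(ω) (the cover time). Then T is almost surely finite, integrable, and E[T] = Σ_{S ⊆ Fin n, S ≠ ∅} (−1)^{|S|+1} / μ(S), where μ(S) = Σ_{i ∈ S} μ{i}. (This is the paper's exact formula for the expected coupon-collection time under an arbitrary sampling distribution.) -/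
open Finset MeasureTheory
open scoped ENNReal

/-- Number of i.i.d. draws until item `i` first appears: `1 + inf {k | ω k = i}`
(`⊤` if it never appears). -/
noncomputable def hitNumber (n : ℕ) (ω : ℕ → Fin n) (i : Fin n) : ℝ≥0∞ :=
  1 + ⨅ k ∈ {k : ℕ | ω k = i}, (k : ℝ≥0∞)

/-- The cover time: number of draws until every item has appeared. -/
noncomputable def coverTime (n : ℕ) (ω : ℕ → Fin n) : ℝ≥0∞ :=
  ⨆ i : Fin n, hitNumber n ω i

/-!
The cover time exceeds `t` exactly when some item is missed by the first `t` draws. By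
inclusion–exclusion over the set `S` of missed items and independence of the draws,
`P(T > t) = ∑_{S ≠ ∅} (-1)^(|S|+1) (1 - μ S)^t`, and summing the geometric series over `t` in
`E[T] = ∑_t P(T > t)` gives the formula.
-/

theorem indicator_iUnion_eq_sum_powerset {ι α R : Type*} [Fintype ι] [CommRing R]
    (A : ι → Set α) (x : α) :
    (⋃ i, A i).indicator (1 : α → R) x
      = ∑ S ∈ univ.powerset.filter (·.Nonempty),
          (-1) ^ (#S + 1) * (⋂ i ∈ S, A i).indicator 1 x := by
  classical
  have hcompl : ∏ i, (1 - (A i).indicator (1 : α → R) x) = 1 - (⋃ i, A i).indicator 1 x := by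
    by_cases hx : x ∈ ⋃ i, A i
    · obtain ⟨i, hi⟩ := Set.mem_iUnion.1 hx
      simp [prod_eq_zero (mem_univ i), hi, hx]
    · simp_all
  have hexpand : ∏ i, (1 - (A i).indicator (1 : α → R) x)
      = ∑ S ∈ univ.powerset, (-1) ^ #S * (⋂ i ∈ S, A i).indicator 1 x := by
    simp [prod_sub, prod_indicator_const_apply]
  rw [← sum_filter_add_sum_filter_not _ (·.Nonempty)] at hexpand
  simp [filter_eq'] at hexpand
  simp only [pow_succ, mul_neg_one, neg_mul, sum_neg_distrib, powerset_univ]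
  linear_combination hcompl - hexpand

theorem measureReal_iUnion_eq_sum_powerset {ι α : Type*} [Fintype ι] [MeasurableSpace α]
    (μ : Measure α) [IsFiniteMeasure μ] {A : ι → Set α} (hA : ∀ i, MeasurableSet (A i)) :
    μ.real (⋃ i, A i)
      = ∑ S ∈ univ.powerset.filter (·.Nonempty), (-1) ^ (#S + 1) * μ.real (⋂ i ∈ S, A i) := by
  have hAS (S : Finset ι) : MeasurableSet (⋂ i ∈ S, A i) :=
    .biInter S.countable_toSet fun i _ => hA i
  rw [← integral_indicator_one (.iUnion hA)]
  simp_rw [indicator_iUnion_eq_sum_powerset]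
  rw [integral_finsetSum _ fun S _ => ((integrable_const 1).indicator (hAS S)).const_mul _]
  simp_rw [integral_const_mul, integral_indicator_one (hAS _)]

theorem tsum_ite_natCast_lt_toENNReal (a : ℕ∞) :
    ∑' t : ℕ, (if (t : ℝ≥0∞) < a then 1 else 0) = (a : ℝ≥0∞) := by
  induction a using ENat.recTopCoe with
  | top => simp
  | coe m =>
    rw [tsum_eq_sum (s := range m) fun t ht => by simpa using ht,
      sum_ite_of_true fun t ht => by simpa using ht]
    simp

theorem lintegral_eq_tsum_measure_natCast_lt {Ω : Type*} [MeasurableSpace Ω] (μ : Measure Ω)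
    {X : Ω → ℝ≥0∞} (hX : Measurable X) (hX_enat : ∀ ω, ∃ m : ℕ∞, X ω = m) :
    ∫⁻ ω, X ω ∂μ = ∑' t : ℕ, μ {ω | (t : ℝ≥0∞) < X ω} := by
  have hmeas (t : ℕ) : MeasurableSet {ω | (t : ℝ≥0∞) < X ω} := measurableSet_lt measurable_const hX
  calc ∫⁻ ω, X ω ∂μ = ∫⁻ ω, ∑' t : ℕ, {ω | (t : ℝ≥0∞) < X ω}.indicator 1 ω ∂μ := by
        refine lintegral_congr fun ω => ?_
        obtain ⟨m, hm⟩ := hX_enat ω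
        simp [Set.indicator_apply, hm, tsum_ite_natCast_lt_toENNReal]
    _ = ∑' t : ℕ, μ {ω | (t : ℝ≥0∞) < X ω} := by
        rw [lintegral_tsum fun t => (measurable_one.indicator (hmeas t)).aemeasurable]
        simp_rw [lintegral_indicator_one (hmeas _)]

theorem lintegral_eq_ofReal_of_hasSum_measureReal_natCast_lt {Ω : Type*} [MeasurableSpace Ω]
    (μ : Measure Ω) [IsFiniteMeasure μ] {X : Ω → ℝ≥0∞} (hX : Measurable X)
    (hX_enat : ∀ ω, ∃ m : ℕ∞, X ω = m) {s : ℝ}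
    (hs : HasSum (fun t : ℕ => μ.real {ω | (t : ℝ≥0∞) < X ω}) s) :
    ∫⁻ ω, X ω ∂μ = ENNReal.ofReal s := by
  rw [lintegral_eq_tsum_measure_natCast_lt μ hX hX_enat, ← hs.tsum_eq,
    ENNReal.ofReal_tsum_of_nonneg (fun _ => measureReal_nonneg) hs.summable]
  exact tsum_congr fun t => (ofReal_measureReal).symm

theorem integral_toReal_of_lintegral_eq_ofReal {Ω : Type*} [MeasurableSpace Ω] {μ : Measure Ω}
    {X : Ω → ℝ≥0∞} (hX : AEMeasurable X μ) {s : ℝ} (hs : 0 ≤ s)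
    (h : ∫⁻ ω, X ω ∂μ = ENNReal.ofReal s) :
    (∀ᵐ ω ∂μ, X ω ≠ ⊤) ∧ Integrable (fun ω => (X ω).toReal) μ ∧ ∫ ω, (X ω).toReal ∂μ = s := by
  have hfin : ∫⁻ ω, X ω ∂μ ≠ ⊤ := h ▸ ENNReal.ofReal_ne_top
  have hae : ∀ᵐ ω ∂μ, X ω < ⊤ := ae_lt_top' hX hfin
  refine ⟨hae.mono fun _ => ne_of_lt, integrable_toReal_of_lintegral_ne_top hX hfin, ?_⟩
  rw [integral_toReal hX hae, h, ENNReal.toReal_ofReal hs]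

theorem natCast_lt_hitNumber_iff {n : ℕ} {ω : ℕ → Fin n} {i : Fin n} {t : ℕ} :
    (t : ℝ≥0∞) < hitNumber n ω i ↔ ∀ k < t, ω k ≠ i := by
  constructor
  · intro ht k hk hki
    have : hitNumber n ω i ≤ t := calc
      hitNumber n ω i ≤ 1 + k := add_le_add_right (biInf_le (fun k : ℕ => (k : ℝ≥0∞)) hki) 1
      _ ≤ t := by exact_mod_cast (by omega : 1 + k ≤ t)
    exact this.not_gt ht
  · intro h
    have : (t : ℝ≥0∞) ≤ ⨅ k ∈ {k : ℕ | ω k = i}, (k : ℝ≥0∞) :=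
      le_iInf₂ fun k hk => Nat.cast_le.2 (not_lt.1 fun hkt => h k hkt hk)
    calc (t : ℝ≥0∞) < t + 1 := ENNReal.lt_add_right (ENNReal.natCast_ne_top t) one_ne_zero
      _ = 1 + t := add_comm _ _
      _ ≤ hitNumber n ω i := add_le_add_right this 1

theorem natCast_lt_coverTime_iff {n : ℕ} {ω : ℕ → Fin n} {t : ℕ} :
    (t : ℝ≥0∞) < coverTime n ω ↔ ∃ i, ∀ k < t, ω k ≠ i := by
  simp only [coverTime, lt_iSup_iff, natCast_lt_hitNumber_iff]

theorem exists_hitNumber_eq_toENNReal (n : ℕ) (ω : ℕ → Fin n) (i : Fin n) :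
    ∃ m : ℕ∞, hitNumber n ω i = m := by
  rcases Set.eq_empty_or_nonempty {k | ω k = i} with hs | hs
  · exact ⟨⊤, by simp [hitNumber, hs]⟩
  · refine ⟨(1 + sInf {k | ω k = i} : ℕ), ?_⟩
    have hinf : ⨅ k ∈ {k | ω k = i}, (k : ℝ≥0∞) = (sInf {k | ω k = i} : ℕ) :=
      le_antisymm (biInf_le _ (Nat.sInf_mem hs))
        (le_iInf₂ fun k hk => Nat.cast_le.2 (Nat.sInf_le hk))
    rw [hitNumber, hinf, ENat.toENNReal_coe, Nat.cast_add, Nat.cast_one]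

theorem exists_coverTime_eq_toENNReal (n : ℕ) (ω : ℕ → Fin n) :
    ∃ m : ℕ∞, coverTime n ω = m := by
  rw [coverTime, ← Finset.sup_univ_eq_iSup]
  refine Finset.sup_induction (p := fun a : ℝ≥0∞ => ∃ m : ℕ∞, a = m) ⟨0, by simp⟩ ?_
    fun i _ => exists_hitNumber_eq_toENNReal n ω i
  rintro _ ⟨a, rfl⟩ _ ⟨b, rfl⟩
  exact ⟨max a b, (ENat.toENNReal_max a b).symm⟩

theorem measurable_hitNumber (n : ℕ) (i : Fin n) :
    Measurable fun ω : ℕ → Fin n => hitNumber n ω i := by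
  unfold hitNumber
  simp only [Set.mem_ofPred_eq, iInf_eq_if]
  exact measurable_const.add <| Measurable.iInf (α := ℝ≥0∞) fun k : ℕ =>
    .ite (measurable_pi_apply k (measurableSet_singleton i)) measurable_const measurable_const

theorem measurable_coverTime (n : ℕ) : Measurable (coverTime n) :=
  .iSup fun i => measurable_hitNumber n i

theorem measureReal_forall_lt_notMem {α : Type*} [MeasurableSpace α] {μ : Measure α}
    [IsProbabilityMeasure μ] {P : Measure (ℕ → α)}
    (hP : ∀ (F : Finset ℕ) (S : ℕ → Set α), P {ω | ∀ k ∈ F, ω k ∈ S k} = ∏ k ∈ F, μ (S k))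
    {S : Set α} (hS : MeasurableSet S) (t : ℕ) :
    P.real {ω | ∀ k < t, ω k ∉ S} = (1 - μ.real S) ^ t := by
  have := hP (range t) fun _ => Sᶜ
  simp only [mem_range, Set.mem_compl_iff, prod_const, card_range, prob_compl_eq_one_sub hS] at this
  rw [measureReal_def, this, ENNReal.toReal_pow,
    ENNReal.toReal_sub_of_le prob_le_one ENNReal.one_ne_top, ENNReal.toReal_one, measureReal_def]

section CouponCollector

variable {n : ℕ} {μ : Measure (Fin n)} [IsProbabilityMeasure μ]
  {P : Measure (ℕ → Fin n)} [IsProbabilityMeasure P]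

theorem measureReal_natCast_lt_coverTime
    (hP : ∀ (F : Finset ℕ) (S : ℕ → Set (Fin n)),
      P {ω | ∀ k ∈ F, ω k ∈ S k} = ∏ k ∈ F, μ (S k)) (t : ℕ) :
    P.real {ω | (t : ℝ≥0∞) < coverTime n ω}
      = ∑ S ∈ univ.powerset.filter (·.Nonempty),
          (-1) ^ (#S + 1) * (1 - ∑ i ∈ S, μ.real {i}) ^ t := by
  have hunion : {ω | (t : ℝ≥0∞) < coverTime n ω} = ⋃ i, {ω | ∀ k < t, ω k ≠ i} := by
    ext ω
    simp [natCast_lt_coverTime_iff]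
  have hinter (S : Finset (Fin n)) :
      ⋂ i ∈ S, {ω : ℕ → Fin n | ∀ k < t, ω k ≠ i}
        = {ω | ∀ k < t, ω k ∉ (S : Set (Fin n))} := by
    ext ω
    simp only [Set.mem_iInter, Set.mem_ofPred_eq, mem_coe]
    exact ⟨fun h k hk hkS => h _ hkS k hk rfl, fun h i hi k hk hki => h k hk (hki ▸ hi)⟩
  rw [hunion, measureReal_iUnion_eq_sum_powerset P fun i => by measurability]
  refine sum_congr rfl fun S _ => ?_
  rw [hinter, measureReal_forall_lt_notMem hP S.measurableSet t, sum_measureReal_singleton]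

theorem hasSum_measureReal_natCast_lt_coverTime (hμ : ∀ i, 0 < μ {i})
    (hP : ∀ (F : Finset ℕ) (S : ℕ → Set (Fin n)),
      P {ω | ∀ k ∈ F, ω k ∈ S k} = ∏ k ∈ F, μ (S k)) :
    HasSum (fun t : ℕ => P.real {ω | (t : ℝ≥0∞) < coverTime n ω})
      (∑ S ∈ univ.powerset.filter (·.Nonempty), (-1) ^ (#S + 1) / ∑ i ∈ S, μ.real {i}) := by
  simp_rw [measureReal_natCast_lt_coverTime hP]
  refine hasSum_sum fun S hS => ?_
  have hpos : 0 < ∑ i ∈ S, μ.real {i} :=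
    sum_pos (fun i _ => ENNReal.toReal_pos (hμ i).ne' (measure_ne_top _ _)) (mem_filter.1 hS).2
  have hle : ∑ i ∈ S, μ.real {i} ≤ 1 := by
    rw [sum_measureReal_singleton]
    exact measureReal_le_one
  have := (hasSum_geometric_of_lt_one (r := 1 - ∑ i ∈ S, μ.real {i}) (by linarith)
    (by linarith)).mul_left ((-1 : ℝ) ^ (#S + 1))
  rwa [sub_sub_cancel, ← div_eq_mul_inv] at this

end CouponCollector

theorem expected_coupon_collector_time_general
    (n : ℕ) (μ : Measure (Fin n)) [IsProbabilityMeasure μ]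
    (hμ : ∀ i : Fin n, 0 < μ {i})
    (P : Measure (ℕ → Fin n)) [IsProbabilityMeasure P]
    (hP : ∀ (F : Finset ℕ) (S : ℕ → Set (Fin n)),
      P {ω | ∀ k ∈ F, ω k ∈ S k} = ∏ k ∈ F, μ (S k)) :
    (∀ᵐ ω ∂P, coverTime n ω ≠ ⊤) ∧
    Integrable (fun ω => (coverTime n ω).toReal) P ∧
    ∫ ω, (coverTime n ω).toReal ∂P
      = ∑ S ∈ (Finset.univ : Finset (Fin n)).powerset.filter fun S => S.Nonempty,
          (-1 : ℝ) ^ (S.card + 1) / (∑ i ∈ S, (μ {i}).toReal) := by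
  have hsum := hasSum_measureReal_natCast_lt_coverTime hμ hP
  exact integral_toReal_of_lintegral_eq_ofReal (measurable_coverTime n).aemeasurable
    (hsum.nonneg fun _ => measureReal_nonneg)
    (lintegral_eq_ofReal_of_hasSum_measureReal_natCast_lt P (measurable_coverTime n)
      (exists_coverTime_eq_toENNReal n) hsum)

theorem expected_coupon_collector_time
    (n : ℕ) (hn : 1 ≤ n) (μ : Measure (Fin n)) [IsProbabilityMeasure μ]
    (hμ : ∀ i : Fin n, 0 < μ {i})
    (P : Measure (ℕ → Fin n)) [IsProbabilityMeasure P]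
    (hP : ∀ (F : Finset ℕ) (S : ℕ → Set (Fin n)),
      P {ω | ∀ k ∈ F, ω k ∈ S k} = ∏ k ∈ F, μ (S k)) :
    (∀ᵐ ω ∂P, coverTime n ω ≠ ⊤) ∧
    Integrable (fun ω => (coverTime n ω).toReal) P ∧
    ∫ ω, (coverTime n ω).toReal ∂P
      = ∑ S ∈ (Finset.univ : Finset (Fin n)).powerset.filter fun S => S.Nonempty,
          (-1 : ℝ) ^ (S.card + 1) / (∑ i ∈ S, (μ {i}).toReal) :=
  expected_coupon_collector_time_general n μ hμ P hP
end

section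
/- Let n ≥ 1, p > 0, and let μ be a probability measure on Fin n with μ{i} ≥ p for every i. Consider Ω = (ℕ → Fin n) with the infinite product measure of copies of μ (i.i.d. draws X₀, X₁, …). Then for every natural number N ≥ 1, the probability that some element of Fin n does not appear among X₀, …, X_{N−1} is at most H_n / (N·p). In particular, for ε ∈ (0,1), if (N : ℝ) ≥ H_n / (p·ε), then with probability at least 1 − ε every element of Fin n appears among the first N draws. (This is the paper's Lemma on the sample complexity for arbitrary action-sampling distributions: N ≳ ln K / (μ_min² ε) samples suffice to observe all action pairs with probability 1 − ε.) -/
/-!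
Union bound: coupon `i` is missed by `N` independent draws with probability
`(1 - μ {i})^N ≤ exp (-N p)`, so some coupon is missed with probability at most `n exp (-x)`,
`x = N p`. If `x ≤ H_n` the claimed bound `H_n / x` is at least `1`; otherwise, since
`x ↦ x exp (-x)` decreases on `[1, ∞)` and `n ≤ exp H_n` (from `log (n + 1) ≤ H_n`), we get
`x · n exp (-x) ≤ n · H_n exp (-H_n) ≤ H_n`. The second statement is the first one for the
complementary event.
-/

open Finset MeasureTheory Real

lemma sum_Icc_one_div_eq_harmonic (n : ℕ) : ∑ k ∈ Icc 1 n, 1 / (k : ℝ) = harmonic n := by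
  simp [harmonic_eq_sum_Icc]

lemma one_le_sum_Icc_one_div {n : ℕ} (hn : 1 ≤ n) : 1 ≤ ∑ k ∈ Icc 1 n, 1 / (k : ℝ) := by
  simpa using single_le_sum (f := fun k : ℕ ↦ 1 / (k : ℝ)) (fun _ _ ↦ by positivity)
    (left_mem_Icc.2 hn)

lemma natCast_le_exp_harmonic (n : ℕ) : (n : ℝ) ≤ exp (harmonic n) :=
  calc (n : ℝ) ≤ ↑(n + 1) := by push_cast; linarith
  _ = exp (log ↑(n + 1)) := (exp_log (by positivity)).symm
  _ ≤ exp (harmonic n) := exp_le_exp.2 (log_add_one_le_harmonic n)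

lemma mul_exp_neg_le_mul_exp_neg {a b : ℝ} (ha : 1 ≤ a) (hab : a ≤ b) :
    b * exp (-b) ≤ a * exp (-a) := by
  have hb : b ≤ a * exp (b - a) := by nlinarith [add_one_le_exp (b - a)]
  calc b * exp (-b) ≤ a * exp (b - a) * exp (-b) := by gcongr
  _ = a * exp (-a) := by rw [mul_assoc, ← exp_add]; ring_nf

lemma min_one_mul_exp_neg_le_div {c H x : ℝ} (hH : 1 ≤ H) (hc : c ≤ exp H) (hx : 0 < x) :
    min 1 (c * exp (-x)) ≤ H / x := by
  rcases le_total x H with hxH | hHx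
  · exact (min_le_left _ _).trans ((one_le_div hx).2 hxH)
  refine (min_le_right _ _).trans ((le_div_iff₀ hx).2 ?_)
  calc c * exp (-x) * x = c * (x * exp (-x)) := by ring
  _ ≤ exp H * (H * exp (-H)) :=
    mul_le_mul hc (mul_exp_neg_le_mul_exp_neg hH hHx) (by positivity) (by positivity)
  _ = H := by rw [mul_left_comm, ← exp_add]; simp

section IID

variable {ι : Type*} [MeasurableSpace ι] {μ : Measure ι} {P : Measure (ℕ → ι)}

lemma measure_forall_lt_ne_eq
    (hP : ∀ (F : Finset ℕ) (S : ℕ → Set ι), P {ω | ∀ k ∈ F, ω k ∈ S k} = ∏ k ∈ F, μ (S k))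
    (N : ℕ) (i : ι) : P {ω | ∀ k < N, ω k ≠ i} = μ {i}ᶜ ^ N := by
  simpa using hP (range N) fun _ ↦ {i}ᶜ

lemma measure_exists_forall_lt_ne_le [Fintype ι]
    (hP : ∀ (F : Finset ℕ) (S : ℕ → Set ι), P {ω | ∀ k ∈ F, ω k ∈ S k} = ∏ k ∈ F, μ (S k))
    (N : ℕ) : P {ω | ∃ i, ∀ k < N, ω k ≠ i} ≤ ∑ i, μ {i}ᶜ ^ N :=
  calc P {ω | ∃ i, ∀ k < N, ω k ≠ i} = P (⋃ i, {ω | ∀ k < N, ω k ≠ i}) := by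
        rw [Set.ofPred_exists]
  _ ≤ ∑ i, P {ω | ∀ k < N, ω k ≠ i} := measure_iUnion_fintype_le P _
  _ = ∑ i, μ {i}ᶜ ^ N := by simp_rw [measure_forall_lt_ne_eq hP]

lemma toReal_measure_exists_forall_lt_ne_le [Fintype ι] [MeasurableSingletonClass ι]
    [IsProbabilityMeasure μ]
    (hP : ∀ (F : Finset ℕ) (S : ℕ → Set ι), P {ω | ∀ k ∈ F, ω k ∈ S k} = ∏ k ∈ F, μ (S k))
    {p : ℝ} (hμ : ∀ i, p ≤ (μ {i}).toReal) (N : ℕ) :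
    (P {ω | ∃ i, ∀ k < N, ω k ≠ i}).toReal ≤ Fintype.card ι * exp (-(N * p)) := by
  have hcompl (i : ι) : (μ {i}ᶜ).toReal ≤ exp (-p) := by
    rw [← measureReal_def, probReal_compl_eq_one_sub (measurableSet_singleton i), measureReal_def]
    linarith [hμ i, add_one_le_exp (-p)]
  have hfinite : ∑ i, μ {i}ᶜ ^ N ≠ ⊤ := ENNReal.sum_ne_top.2 fun _ _ ↦ by finiteness
  calc (P {ω | ∃ i, ∀ k < N, ω k ≠ i}).toReal ≤ (∑ i, μ {i}ᶜ ^ N).toReal :=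
        ENNReal.toReal_mono hfinite (measure_exists_forall_lt_ne_le hP N)
  _ = ∑ i, (μ {i}ᶜ).toReal ^ N := by
        rw [ENNReal.toReal_sum fun _ _ ↦ by finiteness]; simp only [ENNReal.toReal_pow]
  _ ≤ ∑ _i : ι, exp (-p) ^ N := by gcongr with i; exact hcompl i
  _ = Fintype.card ι * exp (-(N * p)) := by
        rw [sum_const, card_univ, nsmul_eq_mul, ← exp_nat_mul, neg_mul_eq_mul_neg]

end IID

theorem coupon_collector_sample_complexity_general
    (n : ℕ) (p : ℝ) (hp : 0 < p)
    (μ : Measure (Fin n)) [IsProbabilityMeasure μ]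
    (hμ : ∀ i : Fin n, p ≤ (μ {i}).toReal)
    (P : Measure (ℕ → Fin n)) [IsProbabilityMeasure P]
    (hP : ∀ (F : Finset ℕ) (S : ℕ → Set (Fin n)),
      P {ω | ∀ k ∈ F, ω k ∈ S k} = ∏ k ∈ F, μ (S k)) :
    (∀ N : ℕ, 1 ≤ N →
      (P {ω | ∃ i : Fin n, ∀ k < N, ω k ≠ i}).toReal
        ≤ (∑ k ∈ Finset.Icc 1 n, 1 / (k : ℝ)) / ((N : ℝ) * p)) ∧
    (∀ (ε : ℝ), ε ∈ Set.Ioo (0 : ℝ) 1 → ∀ N : ℕ,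
      (N : ℝ) ≥ (∑ k ∈ Finset.Icc 1 n, 1 / (k : ℝ)) / (p * ε) →
      (P {ω | ∀ i : Fin n, ∃ k < N, ω k = i}).toReal ≥ 1 - ε) := by
  have hn : 1 ≤ n := Fin.pos_iff_nonempty.2 (nonempty_of_isProbabilityMeasure μ)
  have hnH : (n : ℝ) ≤ exp (∑ k ∈ Icc 1 n, 1 / (k : ℝ)) := by
    rw [sum_Icc_one_div_eq_harmonic]; exact natCast_le_exp_harmonic n
  set H := ∑ k ∈ Icc 1 n, 1 / (k : ℝ)
  have hH : 1 ≤ H := one_le_sum_Icc_one_div hn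
  have missing (N : ℕ) (hN : 1 ≤ N) :
      (P {ω | ∃ i : Fin n, ∀ k < N, ω k ≠ i}).toReal ≤ H / (N * p) := by
    refine (le_min measureReal_le_one ?_).trans
      (min_one_mul_exp_neg_le_div hH hnH (by positivity))
    simpa [measureReal_def] using toReal_measure_exists_forall_lt_ne_le hP hμ N
  refine ⟨missing, fun ε ⟨hε0, hε1⟩ N hN ↦ ?_⟩
  have hHN : H ≤ N * p * ε := by
    rwa [ge_iff_le, div_le_iff₀ (by positivity), ← mul_assoc] at hN
  have hN1 : 1 ≤ N := by
    by_contra! h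
    simp [Nat.lt_one_iff.1 h] at hHN
    linarith
  have hbad : (P {ω | ∃ i : Fin n, ∀ k < N, ω k ≠ i}).toReal ≤ ε :=
    (missing N hN1).trans ((div_le_iff₀ (by positivity)).2 (by linarith))
  have hgood : {ω : ℕ → Fin n | ∀ i, ∃ k < N, ω k = i} = {ω | ∃ i, ∀ k < N, ω k ≠ i}ᶜ := by
    ext; simp
  rw [hgood, ← measureReal_def, probReal_compl_eq_one_sub (by measurability), measureReal_def]
  linarith

theorem coupon_collector_sample_complexity
    (n : ℕ) (hn : 1 ≤ n) (p : ℝ) (hp : 0 < p)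
    (μ : Measure (Fin n)) [IsProbabilityMeasure μ]
    (hμ : ∀ i : Fin n, p ≤ (μ {i}).toReal)
    (P : Measure (ℕ → Fin n)) [IsProbabilityMeasure P]
    (hP : ∀ (F : Finset ℕ) (S : ℕ → Set (Fin n)),
      P {ω | ∀ k ∈ F, ω k ∈ S k} = ∏ k ∈ F, μ (S k)) :
    (∀ N : ℕ, 1 ≤ N →
      (P {ω | ∃ i : Fin n, ∀ k < N, ω k ≠ i}).toReal
        ≤ (∑ k ∈ Finset.Icc 1 n, 1 / (k : ℝ)) / ((N : ℝ) * p)) ∧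
    (∀ (ε : ℝ), ε ∈ Set.Ioo (0 : ℝ) 1 → ∀ N : ℕ,
      (N : ℝ) ≥ (∑ k ∈ Finset.Icc 1 n, 1 / (k : ℝ)) / (p * ε) →
      (P {ω | ∀ i : Fin n, ∃ k < N, ω k = i}).toReal ≥ 1 - ε) :=
  coupon_collector_sample_complexity_general n p hp μ hμ P hP
end
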